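/- arXiv:1103.0935 — 6 statements merged into one kernel-verified Lean document; each statement's English description precedes it below -/
import Mathlib

section
/- Let a > 0, c ≥ 1, and let f : (0,∞) → [0,∞) be measurable with f(x) ≤ c·f(a)·max(1, x/a) for all x > 0. Then for every ξ > 0, f(a) ≥ ξ·Lf(ξ) / (c·(1 + (aξ)⁻¹·e^{-aξ})), where Lf(ξ) = ∫₀^∞ e^{-ξx} f(x) dx is the Laplace transform of f. -/
/-!
Bounding the integrand by the majorant `exp (-ξ x) * (c f(a) max 1 (x / a))` reduces the claim to
the explicit Laplace transform of `max 1 (x / a)`, namely `(1 + (aξ)⁻¹ e^{-aξ}) / ξ`: split `(0, ∞)`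
at `a`, where it is `e^{-ξx}` on `(0, a]` and `x e^{-ξx} / a` on `(a, ∞)`.
-/

open MeasureTheory Real Set Filter Topology

theorem integral_Ioc_exp_neg_mul {ξ : ℝ} (hξ : 0 < ξ) {a : ℝ} (ha : 0 ≤ a) :
    ∫ x in Ioc 0 a, exp (-ξ * x) = (1 - exp (-ξ * a)) / ξ := by
  have hneg : -ξ < 0 := neg_neg_of_pos hξ
  have hsplit := setIntegral_union (Ioc_disjoint_Ioi le_rfl) measurableSet_Ioi
    ((integrableOn_exp_mul_Ioi hneg 0).mono_set Ioc_subset_Ioi_self)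
    (integrableOn_exp_mul_Ioi hneg a)
  rw [Ioc_union_Ioi_eq_Ioi ha, integral_exp_mul_Ioi hneg, integral_exp_mul_Ioi hneg] at hsplit
  rw [eq_sub_of_add_eq hsplit.symm]
  simp only [mul_zero, exp_zero]
  field_simp

theorem hasDerivAt_mul_exp_neg_mul_primitive {ξ : ℝ} (hξ : 0 < ξ) (x : ℝ) :
    HasDerivAt (fun x => -(x / ξ + 1 / ξ ^ 2) * exp (-ξ * x)) (x * exp (-ξ * x)) x := by
  have hexp : HasDerivAt (fun x => exp (-ξ * x)) (-ξ * exp (-ξ * x)) x := by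
    simpa [mul_comm] using ((hasDerivAt_id x).const_mul (-ξ)).exp
  have hpoly : HasDerivAt (fun x => -(x / ξ + 1 / ξ ^ 2)) (-(1 / ξ)) x :=
    (((hasDerivAt_id x).div_const ξ).add_const (1 / ξ ^ 2)).neg
  refine (hpoly.mul hexp).congr_deriv ?_
  field_simp
  ring

theorem tendsto_mul_exp_neg_mul_primitive {ξ : ℝ} (hξ : 0 < ξ) :
    Tendsto (fun x => -(x / ξ + 1 / ξ ^ 2) * exp (-ξ * x)) atTop (𝓝 0) := by
  have hξx : Tendsto (fun x => ξ * x) atTop atTop := tendsto_id.const_mul_atTop hξ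
  have hpoly := (tendsto_pow_mul_exp_neg_atTop_nhds_zero 1).comp hξx
  have hexp := tendsto_exp_neg_atTop_nhds_zero.comp hξx
  have := (hpoly.const_mul (-(1 / ξ ^ 2))).add (hexp.const_mul (-(1 / ξ ^ 2)))
  simp only [mul_zero, add_zero] at this
  refine this.congr fun x => ?_
  simp only [Function.comp, pow_one]
  field_simp
  ring

theorem integrableOn_Ioi_mul_exp_neg_mul {ξ : ℝ} (hξ : 0 < ξ) {a : ℝ} (ha : 0 ≤ a) :
    IntegrableOn (fun x => x * exp (-ξ * x)) (Ioi a) :=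
  integrableOn_Ioi_deriv_of_nonneg' (fun x _ => hasDerivAt_mul_exp_neg_mul_primitive hξ x)
    (fun _ hx => mul_nonneg (ha.trans_lt hx).le (exp_pos _).le)
    (tendsto_mul_exp_neg_mul_primitive hξ)

theorem integral_Ioi_mul_exp_neg_mul {ξ : ℝ} (hξ : 0 < ξ) {a : ℝ} (ha : 0 ≤ a) :
    ∫ x in Ioi a, x * exp (-ξ * x) = (a / ξ + 1 / ξ ^ 2) * exp (-ξ * a) := by
  rw [integral_Ioi_of_hasDerivAt_of_tendsto'
    (fun x _ => hasDerivAt_mul_exp_neg_mul_primitive hξ x)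
    (integrableOn_Ioi_mul_exp_neg_mul hξ ha) (tendsto_mul_exp_neg_mul_primitive hξ)]
  ring

section MaxOneDiv

variable {a ξ : ℝ}

theorem exp_neg_mul_mul_max_one_div_of_le {x : ℝ} (ha : 0 < a) (hx : x ≤ a) :
    exp (-ξ * x) * max 1 (x / a) = exp (-ξ * x) := by
  rw [max_eq_left ((div_le_one ha).2 hx), mul_one]

theorem exp_neg_mul_mul_max_one_div_of_lt {x : ℝ} (ha : 0 < a) (hx : a < x) :
    exp (-ξ * x) * max 1 (x / a) = a⁻¹ * (x * exp (-ξ * x)) := by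
  rw [max_eq_right ((one_le_div ha).2 hx.le)]
  ring

theorem integrableOn_exp_neg_mul_mul_max_one_div (ha : 0 < a) (hξ : 0 < ξ) :
    IntegrableOn (fun x => exp (-ξ * x) * max 1 (x / a)) (Ioi 0) := by
  rw [← Ioc_union_Ioi_eq_Ioi ha.le]
  refine IntegrableOn.union ?_ ?_
  · exact (by fun_prop : Continuous fun x => exp (-ξ * x) * max 1 (x / a)).integrableOn_Ioc
  · exact IntegrableOn.congr_fun ((integrableOn_Ioi_mul_exp_neg_mul hξ ha.le).const_mul a⁻¹)
      (fun x hx => (exp_neg_mul_mul_max_one_div_of_lt ha hx).symm) measurableSet_Ioi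

theorem integral_exp_neg_mul_mul_max_one_div (ha : 0 < a) (hξ : 0 < ξ) :
    ∫ x in Ioi 0, exp (-ξ * x) * max 1 (x / a) = (1 + (a * ξ)⁻¹ * exp (-(a * ξ))) / ξ := by
  have hint := integrableOn_exp_neg_mul_mul_max_one_div ha hξ
  rw [← Ioc_union_Ioi_eq_Ioi ha.le, setIntegral_union (Ioc_disjoint_Ioi le_rfl) measurableSet_Ioi
      (hint.mono_set Ioc_subset_Ioi_self) (hint.mono_set (Ioi_subset_Ioi ha.le)),
    setIntegral_congr_fun measurableSet_Ioc
      (fun x hx => exp_neg_mul_mul_max_one_div_of_le ha hx.2),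
    setIntegral_congr_fun measurableSet_Ioi
      (fun x hx => exp_neg_mul_mul_max_one_div_of_lt ha hx),
    integral_Ioc_exp_neg_mul hξ ha.le, integral_const_mul, integral_Ioi_mul_exp_neg_mul hξ ha.le,
    neg_mul, mul_comm ξ a]
  field_simp
  ring

end MaxOneDiv

theorem laplace_lower_bound_general
    (f : ℝ → ℝ) (a c ξ : ℝ) (ha : 0 < a) (hc : 1 ≤ c) (hξ : 0 < ξ)
    (hf_bound : ∀ x, 0 < x → f x ≤ c * f a * max 1 (x / a))
    (hf_int : IntegrableOn (fun x => Real.exp (-ξ * x) * f x) (Ioi 0)) :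
    f a ≥ ξ * (∫ x in Ioi (0:ℝ), Real.exp (-ξ * x) * f x) /
      (c * (1 + (a * ξ)⁻¹ * Real.exp (-(a * ξ)))) := by
  have hmajorant : ∫ x in Ioi (0:ℝ), exp (-ξ * x) * f x
      ≤ c * f a * ∫ x in Ioi (0:ℝ), exp (-ξ * x) * max 1 (x / a) := by
    rw [← integral_const_mul]
    refine setIntegral_mono_on hf_int
      ((integrableOn_exp_neg_mul_mul_max_one_div ha hξ).const_mul _) measurableSet_Ioi
      fun x hx => ?_
    rw [mul_left_comm]
    exact mul_le_mul_of_nonneg_left (hf_bound x hx) (exp_pos _).le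
  rw [integral_exp_neg_mul_mul_max_one_div ha hξ] at hmajorant
  rw [ge_iff_le, div_le_iff₀ (by positivity)]
  calc ξ * ∫ x in Ioi (0:ℝ), exp (-ξ * x) * f x
      ≤ ξ * (c * f a * ((1 + (a * ξ)⁻¹ * exp (-(a * ξ))) / ξ)) := by gcongr
    _ = f a * (c * (1 + (a * ξ)⁻¹ * exp (-(a * ξ)))) := by field_simp

theorem laplace_lower_bound
    (f : ℝ → ℝ) (a c ξ : ℝ) (ha : 0 < a) (hc : 1 ≤ c) (hξ : 0 < ξ)
    (hf_nonneg : ∀ x, 0 < x → 0 ≤ f x)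
    (hf_bound : ∀ x, 0 < x → f x ≤ c * f a * max 1 (x / a))
    (hf_int : IntegrableOn (fun x => Real.exp (-ξ * x) * f x) (Ioi 0)) :
    f a ≥ ξ * (∫ x in Ioi (0:ℝ), Real.exp (-ξ * x) * f x) /
      (c * (1 + (a * ξ)⁻¹ * Real.exp (-(a * ξ)))) :=
  laplace_lower_bound_general f a c ξ ha hc hξ hf_bound hf_int
end

section
/- Let ψ : (0,∞) → (0,∞) be such that ψ and ξ ↦ ξ/ψ(ξ) are both nondecreasing. Define ψ†(ξ) = exp( (1/π) ∫₀^∞ log ψ(ξ²ζ²)/(1+ζ²) dζ ) for ξ > 0. Then e^{-2G/π} √ψ(ξ²) ≤ ψ†(ξ) ≤ e^{2G/π} √ψ(ξ²) for all ξ > 0, where G is the Catalan constant. Moreover e^{2G/π} ≤ 2. -/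
/-!
The hypotheses on `ψ` give `ψ b / ψ a ≤ max 1 (b / a)`, so `log ψ(ξ²ζ²) - log ψ(ξ²)` lies between
`-2 log⁺ ζ⁻¹` and `2 log⁺ ζ`. The measure `dζ / (1 + ζ²)` on `(0, ∞)` has mass `π / 2` and is
invariant under `ζ ↦ ζ⁻¹`, so after integration the error is at most
`2 ∫₁^∞ log ζ / (1 + ζ²) dζ = 2G`, the last integral being evaluated by expanding `1 / (1 + ζ²)`
as a geometric series in `ζ⁻²`. Finally `G ≤ ∫₁^∞ log ζ / ζ² dζ = 1` and `2 / π < log 2`.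
-/

open MeasureTheory Real Set Filter Topology

section LogMulRpow

variable {m : ℝ}

lemma hasDerivAt_log_mul_rpow_antideriv (hm : m ≠ 0) {x : ℝ} (hx : 0 < x) :
    HasDerivAt (fun x => -(x ^ (-m) * log x) / m - x ^ (-m) / m ^ 2)
      (log x * x ^ (-m - 1)) x := by
  have hpow : HasDerivAt (fun y : ℝ => y ^ (-m)) (-m * x ^ (-m - 1)) x :=
    hasDerivAt_rpow_const (Or.inl hx.ne')
  refine (((hpow.mul (hasDerivAt_log hx.ne')).neg.div_const m).sub
    (hpow.div_const (m ^ 2))).congr_deriv ?_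
  rw [show x ^ (-m) = x ^ (-m - 1) * x by rw [← rpow_add_one hx.ne']; ring_nf]
  field_simp
  ring

lemma tendsto_log_mul_rpow_antideriv_atTop (hm : 0 < m) :
    Tendsto (fun x => -(x ^ (-m) * log x) / m - x ^ (-m) / m ^ 2) atTop (𝓝 0) := by
  have hlog : Tendsto (fun x : ℝ => x ^ (-m) * log x) atTop (𝓝 0) := by
    refine (isLittleO_log_rpow_atTop hm).tendsto_div_nhds_zero.congr' ?_
    filter_upwards [eventually_gt_atTop 0] with x hx
    rw [rpow_neg hx.le, div_eq_inv_mul]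
  simpa using (hlog.neg.div_const m).sub ((tendsto_rpow_neg_atTop hm).div_const (m ^ 2))

lemma log_mul_rpow_nonneg {x : ℝ} (hx : 1 ≤ x) : 0 ≤ log x * x ^ m :=
  mul_nonneg (log_nonneg hx) (rpow_nonneg (zero_le_one.trans hx) _)

lemma integrableOn_log_mul_rpow_Ioi_one (hm : 0 < m) :
    IntegrableOn (fun x => log x * x ^ (-m - 1)) (Ioi 1) :=
  integrableOn_Ioi_deriv_of_nonneg'
    (fun _ hx => hasDerivAt_log_mul_rpow_antideriv hm.ne' (zero_lt_one.trans_le hx))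
    (fun _ hx => log_mul_rpow_nonneg (le_of_lt hx)) (tendsto_log_mul_rpow_antideriv_atTop hm)

lemma integral_log_mul_rpow_Ioi_one (hm : 0 < m) :
    ∫ x in Ioi 1, log x * x ^ (-m - 1) = (m ^ 2)⁻¹ := by
  rw [integral_Ioi_of_hasDerivAt_of_nonneg'
    (fun _ hx => hasDerivAt_log_mul_rpow_antideriv hm.ne' (zero_lt_one.trans_le hx))
    (fun _ hx => log_mul_rpow_nonneg (le_of_lt hx)) (tendsto_log_mul_rpow_antideriv_atTop hm)]
  simp

end LogMulRpow

noncomputable def catalanConstant : ℝ := ∑' n : ℕ, (-1 : ℝ) ^ n / (2 * n + 1) ^ 2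

section Catalan

lemma rpow_neg_odd_sub_one {x : ℝ} (hx : 0 < x) (n : ℕ) :
    x ^ (-(2 * n + 1 : ℝ) - 1) = ((x ^ 2)⁻¹) ^ (n + 1) := by
  rw [show -(2 * n + 1 : ℝ) - 1 = -((2 * (n + 1) : ℕ) : ℝ) by push_cast; ring,
    rpow_neg hx.le, rpow_natCast, pow_mul, inv_pow]

lemma hasSum_log_div_one_add_sq {x : ℝ} (hx : 1 < x) :
    HasSum (fun n : ℕ => (-1) ^ n * (log x * x ^ (-(2 * n + 1 : ℝ) - 1)))
      (log x / (1 + x ^ 2)) := by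
  have hx0 : 0 < x := zero_lt_one.trans hx
  have hr : |-(x ^ 2)⁻¹| < 1 := by
    rw [abs_neg, abs_of_pos (by positivity)]
    exact inv_lt_one_of_one_lt₀ (one_lt_pow₀ hx two_ne_zero)
  have hterm : (fun n : ℕ => (-1) ^ n * (log x * x ^ (-(2 * n + 1 : ℝ) - 1))) =
      fun n => log x * (x ^ 2)⁻¹ * (-(x ^ 2)⁻¹) ^ n := by
    ext n
    rw [rpow_neg_odd_sub_one hx0, neg_pow, pow_succ]
    ring
  rw [hterm, show log x / (1 + x ^ 2) = log x * (x ^ 2)⁻¹ * (1 - -(x ^ 2)⁻¹)⁻¹ by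
    rw [sub_neg_eq_add, mul_assoc, ← mul_inv, mul_add, mul_one, mul_inv_cancel₀ (by positivity),
      add_comm, div_eq_mul_inv]]
  exact (hasSum_geometric_of_abs_lt_one hr).mul_left _

lemma log_div_one_add_sq_le {x : ℝ} (hx : 1 ≤ x) :
    log x / (1 + x ^ 2) ≤ log x * x ^ (-1 - 1 : ℝ) := by
  rw [show (-1 - 1 : ℝ) = -(2 : ℕ) by norm_num, rpow_neg (zero_le_one.trans hx), rpow_natCast,
    ← div_eq_mul_inv]
  gcongr
  · exact log_nonneg hx
  · linarith

lemma integrableOn_log_div_one_add_sq_Ioi_one :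
    IntegrableOn (fun x => log x / (1 + x ^ 2)) (Ioi 1) := by
  refine (integrableOn_log_mul_rpow_Ioi_one one_pos).mono' ?_ ?_
  · refine ContinuousOn.aestronglyMeasurable (fun x hx => ?_) measurableSet_Ioi
    have hx0 : x ≠ 0 := (zero_lt_one.trans hx).ne'
    fun_prop (disch := first | exact hx0 | positivity)
  · filter_upwards [ae_restrict_mem measurableSet_Ioi] with x (hx : 1 < x)
    rw [norm_of_nonneg (div_nonneg (log_nonneg hx.le) (by positivity))]
    exact log_div_one_add_sq_le hx.le

lemma summable_odd_sq_inv : Summable fun n : ℕ => ((2 * n + 1 : ℝ) ^ 2)⁻¹ := by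
  refine (summable_pow_div_add (1 : ℝ) 2 1 one_lt_two).of_nonneg_of_le (fun n => by positivity)
    fun n => ?_
  rw [norm_div, norm_one, norm_pow, Nat.cast_one, Real.norm_of_nonneg (by positivity), one_div]
  gcongr
  linarith [(Nat.cast_nonneg n : (0 : ℝ) ≤ n)]

theorem integral_log_div_one_add_sq_Ioi_one :
    ∫ x in Ioi 1, log x / (1 + x ^ 2) = catalanConstant := by
  have hint (n : ℕ) : IntegrableOn (fun x => log x * x ^ (-(2 * n + 1 : ℝ) - 1)) (Ioi 1) :=
    integrableOn_log_mul_rpow_Ioi_one (by positivity)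
  have hval (n : ℕ) : ∫ x in Ioi 1, log x * x ^ (-(2 * n + 1 : ℝ) - 1) = ((2 * n + 1 : ℝ) ^ 2)⁻¹ :=
    integral_log_mul_rpow_Ioi_one (by positivity)
  have hnorm (n : ℕ) : ∫ x in Ioi 1, ‖(-1) ^ n * (log x * x ^ (-(2 * n + 1 : ℝ) - 1))‖
      = ((2 * n + 1 : ℝ) ^ 2)⁻¹ := by
    rw [← hval]
    refine setIntegral_congr_fun measurableSet_Ioi fun x (hx : 1 < x) => ?_
    rw [norm_mul, norm_pow, norm_neg, norm_one, one_pow, one_mul,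
      norm_of_nonneg (log_mul_rpow_nonneg hx.le)]
  have hsum := hasSum_integral_of_summable_integral_norm
    (fun n => (hint n).const_mul ((-1) ^ n)) (by simpa only [hnorm] using summable_odd_sq_inv)
  calc ∫ x in Ioi 1, log x / (1 + x ^ 2)
      = ∫ x in Ioi 1, ∑' n : ℕ, (-1) ^ n * (log x * x ^ (-(2 * n + 1 : ℝ) - 1)) :=
        setIntegral_congr_fun measurableSet_Ioi fun x (hx : 1 < x) =>
          (hasSum_log_div_one_add_sq hx).tsum_eq.symm
    _ = catalanConstant := by
      rw [← hsum.tsum_eq, catalanConstant]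
      exact tsum_congr fun n => by rw [integral_const_mul, hval, div_eq_mul_inv]

lemma catalanConstant_le_one : catalanConstant ≤ 1 := by
  rw [← integral_log_div_one_add_sq_Ioi_one]
  calc ∫ x in Ioi 1, log x / (1 + x ^ 2) ≤ ∫ x in Ioi 1, log x * x ^ (-1 - 1 : ℝ) :=
        setIntegral_mono_on integrableOn_log_div_one_add_sq_Ioi_one
          (integrableOn_log_mul_rpow_Ioi_one one_pos) measurableSet_Ioi
          fun x hx => log_div_one_add_sq_le (le_of_lt hx)
    _ = 1 := by rw [integral_log_mul_rpow_Ioi_one one_pos]; norm_num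

lemma exp_two_mul_catalanConstant_div_pi_le_two : exp (2 * catalanConstant / π) ≤ 2 := by
  refine (exp_le_exp.2 ?_).trans (exp_log two_pos).le
  rw [div_le_iff₀ pi_pos]
  nlinarith [catalanConstant_le_one, pi_gt_three, log_two_gt_d9]

end Catalan

section Inversion

lemma rpow_neg_one_smul_comp_inv_div_one_add_sq (f : ℝ → ℝ) {x : ℝ} (hx : 0 < x) :
    (|(-1 : ℝ)| * x ^ ((-1 : ℝ) - 1)) • (f (x ^ (-1 : ℝ))⁻¹ / (1 + (x ^ (-1 : ℝ)) ^ 2))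
      = f x / (1 + x ^ 2) := by
  rw [show (-1 : ℝ) - 1 = -(2 : ℕ) by norm_num, rpow_neg hx.le, rpow_natCast, rpow_neg_one,
    inv_inv, smul_eq_mul, abs_neg, abs_one, one_mul]
  field_simp
  ring

lemma integral_comp_inv_div_one_add_sq (f : ℝ → ℝ) :
    ∫ x in Ioi 0, f x⁻¹ / (1 + x ^ 2) = ∫ x in Ioi 0, f x / (1 + x ^ 2) := by
  rw [← integral_comp_rpow_Ioi _ (by norm_num : (-1 : ℝ) ≠ 0)]
  exact setIntegral_congr_fun measurableSet_Ioi fun x hx =>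
    rpow_neg_one_smul_comp_inv_div_one_add_sq f hx

lemma integrableOn_comp_inv_div_one_add_sq_iff (f : ℝ → ℝ) :
    IntegrableOn (fun x => f x⁻¹ / (1 + x ^ 2)) (Ioi 0) ↔
      IntegrableOn (fun x => f x / (1 + x ^ 2)) (Ioi 0) := by
  rw [← integrableOn_Ioi_comp_rpow_iff _ (by norm_num : (-1 : ℝ) ≠ 0)]
  exact integrableOn_congr_fun (fun x hx => rpow_neg_one_smul_comp_inv_div_one_add_sq f hx)
    measurableSet_Ioi

lemma posLog_div_one_add_sq_eqOn :
    EqOn (fun x => log⁺ x / (1 + x ^ 2)) ((Ioi 1).indicator fun x => log x / (1 + x ^ 2))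
      (Ioi 0) := by
  intro x (hx : 0 < x)
  dsimp only
  by_cases hx1 : x ∈ Ioi 1
  · rw [indicator_of_mem hx1, posLog_eq_log (by rw [abs_of_pos hx]; exact le_of_lt hx1)]
  · rw [indicator_of_notMem hx1,
      (posLog_eq_zero_iff x).2 (by rw [abs_of_pos hx]; exact not_lt.1 hx1), zero_div]

lemma integrableOn_posLog_div_one_add_sq :
    IntegrableOn (fun x => log⁺ x / (1 + x ^ 2)) (Ioi 0) :=
  (integrableOn_congr_fun posLog_div_one_add_sq_eqOn measurableSet_Ioi).2
    (integrableOn_log_div_one_add_sq_Ioi_one.integrable_indicator measurableSet_Ioi).integrableOn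

lemma integral_posLog_div_one_add_sq :
    ∫ x in Ioi 0, log⁺ x / (1 + x ^ 2) = catalanConstant := by
  rw [setIntegral_congr_fun measurableSet_Ioi posLog_div_one_add_sq_eqOn,
    setIntegral_indicator measurableSet_Ioi, Ioi_inter_Ioi, sup_of_le_right zero_le_one,
    integral_log_div_one_add_sq_Ioi_one]

end Inversion

lemma posLog_le_abs_log (x : ℝ) : log⁺ x ≤ |log x| :=
  max_le (abs_nonneg _) (le_abs_self _)

section Psi

variable {ψ : ℝ → ℝ} {a b : ℝ}

lemma log_apply_sub_log_apply_le_posLog_div (hψ_pos : ∀ x, 0 < x → 0 < ψ x)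
    (hψ_mono : MonotoneOn ψ (Ioi 0)) (hψ_quot : MonotoneOn (fun x => x / ψ x) (Ioi 0))
    (ha : 0 < a) (hb : 0 < b) : log (ψ b) - log (ψ a) ≤ log⁺ (b / a) := by
  rcases le_total b a with hba | hab
  · have := log_le_log (hψ_pos b hb) (hψ_mono hb ha hba)
    linarith [posLog_nonneg (x := b / a)]
  · have hq : a / ψ a ≤ b / ψ b := hψ_quot ha hb hab
    rw [div_le_div_iff₀ (hψ_pos a ha) (hψ_pos b hb)] at hq
    have hψb : ψ b ≤ b / a * ψ a := by
      rw [div_mul_eq_mul_div, le_div_iff₀ ha]; linarith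
    have := log_le_log (hψ_pos b hb) hψb
    rw [log_mul (div_pos hb ha).ne' (hψ_pos a ha).ne'] at this
    have hlog : log (b / a) ≤ log⁺ (b / a) := le_max_right _ _
    linarith

lemma abs_log_apply_sub_log_apply_le (hψ_pos : ∀ x, 0 < x → 0 < ψ x)
    (hψ_mono : MonotoneOn ψ (Ioi 0)) (hψ_quot : MonotoneOn (fun x => x / ψ x) (Ioi 0))
    (ha : 0 < a) (hb : 0 < b) : |log (ψ b) - log (ψ a)| ≤ |log (b / a)| := by
  have hup := log_apply_sub_log_apply_le_posLog_div hψ_pos hψ_mono hψ_quot ha hb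
  have hlow := log_apply_sub_log_apply_le_posLog_div hψ_pos hψ_mono hψ_quot hb ha
  rw [← inv_div] at hlow
  have hinv := posLog_le_abs_log (b / a)⁻¹
  rw [log_inv, abs_neg] at hinv
  rw [abs_le]
  constructor <;> linarith [posLog_le_abs_log (b / a)]

lemma integrableOn_log_apply_mul_sq_div_one_add_sq (hψ_pos : ∀ x, 0 < x → 0 < ψ x)
    (hψ_mono : MonotoneOn ψ (Ioi 0)) (hψ_quot : MonotoneOn (fun x => x / ψ x) (Ioi 0))
    (hψ_int : IntegrableOn (fun ζ : ℝ => min 1 (ζ ^ 2)⁻¹ * |log (ψ (ζ ^ 2))|) (Ioi 0))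
    (ha : 0 < a) :
    IntegrableOn (fun ζ => log (ψ (a * ζ ^ 2)) / (1 + ζ ^ 2)) (Ioi 0) := by
  have hmono : MonotoneOn (fun ζ : ℝ => ψ (a * ζ ^ 2)) (Ioi 0) :=
    fun u (hu : 0 < u) v (hv : 0 < v) huv =>
      hψ_mono (mem_Ioi.2 (by positivity)) (mem_Ioi.2 (by positivity)) (by gcongr)
  have hmeas : AEStronglyMeasurable (fun ζ => log (ψ (a * ζ ^ 2)) / (1 + ζ ^ 2))
      (volume.restrict (Ioi 0)) :=
    ((measurable_log.comp_aemeasurable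
      (aemeasurable_restrict_of_monotoneOn measurableSet_Ioi hmono)).div
      (by fun_prop : Measurable fun ζ : ℝ => 1 + ζ ^ 2).aemeasurable).aestronglyMeasurable
  refine (hψ_int.add (integrable_inv_one_add_sq.const_mul |log a|).integrableOn).mono' hmeas ?_
  filter_upwards [ae_restrict_mem measurableSet_Ioi] with ζ (hζ : 0 < ζ)
  have hsq : 0 < ζ ^ 2 := by positivity
  have hshift := abs_log_apply_sub_log_apply_le hψ_pos hψ_mono hψ_quot hsq (mul_pos ha hsq)
  rw [mul_div_cancel_right₀ a hsq.ne'] at hshift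
  have hlog : |log (ψ (a * ζ ^ 2))| ≤ |log (ψ (ζ ^ 2))| + |log a| := by
    linarith [abs_sub_abs_le_abs_sub (log (ψ (a * ζ ^ 2))) (log (ψ (ζ ^ 2)))]
  have hweight : (1 + ζ ^ 2)⁻¹ ≤ min 1 (ζ ^ 2)⁻¹ :=
    le_min (inv_le_one_of_one_le₀ (by linarith)) (inv_anti₀ hsq (by linarith))
  rw [norm_div, norm_of_nonneg (by positivity : (0 : ℝ) ≤ 1 + ζ ^ 2), div_eq_inv_mul,
    Pi.add_apply]
  calc (1 + ζ ^ 2)⁻¹ * |log (ψ (a * ζ ^ 2))|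
      ≤ (1 + ζ ^ 2)⁻¹ * (|log (ψ (ζ ^ 2))| + |log a|) := by gcongr
    _ ≤ min 1 (ζ ^ 2)⁻¹ * |log (ψ (ζ ^ 2))| + |log a| * (1 + ζ ^ 2)⁻¹ := by
        rw [mul_add, mul_comm _ |log a|]
        gcongr

lemma abs_integral_log_apply_mul_sq_div_sub_le (hψ_pos : ∀ x, 0 < x → 0 < ψ x)
    (hψ_mono : MonotoneOn ψ (Ioi 0)) (hψ_quot : MonotoneOn (fun x => x / ψ x) (Ioi 0))
    (hψ_int : IntegrableOn (fun ζ : ℝ => min 1 (ζ ^ 2)⁻¹ * |log (ψ (ζ ^ 2))|) (Ioi 0))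
    (ha : 0 < a) :
    |(∫ ζ in Ioi 0, log (ψ (a * ζ ^ 2)) / (1 + ζ ^ 2)) - π / 2 * log (ψ a)|
      ≤ 2 * catalanConstant := by
  set u := fun ζ : ℝ => (log (ψ (a * ζ ^ 2)) - log (ψ a)) / (1 + ζ ^ 2)
  have hconst : IntegrableOn (fun ζ : ℝ => log (ψ a) / (1 + ζ ^ 2)) (Ioi 0) := by
    simpa only [div_eq_mul_inv] using
      (integrable_inv_one_add_sq.const_mul (log (ψ a))).integrableOn
  have hint := integrableOn_log_apply_mul_sq_div_one_add_sq hψ_pos hψ_mono hψ_quot hψ_int ha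
  have hu_int : IntegrableOn u (Ioi 0) := by
    refine (hint.sub hconst).congr_fun (fun ζ _ => ?_) measurableSet_Ioi
    simp only [u, Pi.sub_apply, sub_div]
  have hu : ∫ ζ in Ioi 0, u ζ
      = (∫ ζ in Ioi 0, log (ψ (a * ζ ^ 2)) / (1 + ζ ^ 2)) - π / 2 * log (ψ a) := by
    have hconst_val : ∫ ζ in Ioi 0, log (ψ a) / (1 + ζ ^ 2) = π / 2 * log (ψ a) := by
      simp_rw [div_eq_mul_inv]
      rw [integral_const_mul, integral_Ioi_inv_one_add_sq, arctan_zero, sub_zero]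
      ring
    simp only [u, sub_div]
    rw [integral_sub hint hconst, hconst_val]
  have hupper : ∀ ζ ∈ Ioi (0 : ℝ), u ζ ≤ 2 * (log⁺ ζ / (1 + ζ ^ 2)) := fun ζ (hζ : 0 < ζ) => by
    have h := log_apply_sub_log_apply_le_posLog_div hψ_pos hψ_mono hψ_quot ha
      (mul_pos ha (pow_pos hζ 2))
    rw [mul_div_cancel_left₀ _ ha.ne', posLog_pow, Nat.cast_ofNat] at h
    rw [← mul_div_assoc]
    exact div_le_div_of_nonneg_right h (by positivity)
  have hlower : ∀ ζ ∈ Ioi (0 : ℝ), -(2 * (log⁺ ζ⁻¹ / (1 + ζ ^ 2))) ≤ u ζ :=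
    fun ζ (hζ : 0 < ζ) => by
    have h := log_apply_sub_log_apply_le_posLog_div hψ_pos hψ_mono hψ_quot
      (mul_pos ha (pow_pos hζ 2)) ha
    rw [div_mul_cancel_left₀ ha.ne', ← inv_pow, posLog_pow, Nat.cast_ofNat] at h
    rw [← mul_div_assoc, ← neg_div]
    exact div_le_div_of_nonneg_right (by linarith) (by positivity)
  have hle : ∫ ζ in Ioi 0, u ζ ≤ 2 * catalanConstant := by
    calc ∫ ζ in Ioi 0, u ζ ≤ ∫ ζ in Ioi 0, 2 * (log⁺ ζ / (1 + ζ ^ 2)) :=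
          setIntegral_mono_on hu_int (integrableOn_posLog_div_one_add_sq.const_mul 2)
            measurableSet_Ioi hupper
      _ = 2 * catalanConstant := by rw [integral_const_mul, integral_posLog_div_one_add_sq]
  have hge : -(2 * catalanConstant) ≤ ∫ ζ in Ioi 0, u ζ := by
    calc -(2 * catalanConstant) = ∫ ζ in Ioi 0, -(2 * (log⁺ ζ⁻¹ / (1 + ζ ^ 2))) := by
          rw [integral_neg, integral_const_mul, integral_comp_inv_div_one_add_sq posLog,
            integral_posLog_div_one_add_sq]
      _ ≤ ∫ ζ in Ioi 0, u ζ :=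
          setIntegral_mono_on
            (((integrableOn_comp_inv_div_one_add_sq_iff posLog).2
              integrableOn_posLog_div_one_add_sq).const_mul 2).neg
            hu_int measurableSet_Ioi hlower
  rw [← hu, abs_le]
  exact ⟨hge, hle⟩

lemma exp_mul_sqrt_le_exp_of_abs_sub_le {J y C : ℝ} (hy : 0 < y)
    (h : |J - π / 2 * log y| ≤ 2 * C) :
    exp (-2 * C / π) * √y ≤ exp (1 / π * J) ∧ exp (1 / π * J) ≤ exp (2 * C / π) * √y := by
  rw [← exp_log hy, ← exp_half, ← exp_add, ← exp_add, exp_le_exp, exp_le_exp,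
    neg_mul, neg_div]
  have hdiv : |1 / π * J - log y / 2| ≤ 2 * C / π := by
    rw [show 1 / π * J - log y / 2 = (J - π / 2 * log y) / π by field_simp, abs_div,
      abs_of_pos pi_pos]
    exact div_le_div_of_nonneg_right h pi_pos.le
  obtain ⟨hge, hle⟩ := abs_le.1 hdiv
  constructor <;> linarith

end Psi

theorem dagger_two_sided_estimate
    (ψ : ℝ → ℝ) (hψ_pos : ∀ x, 0 < x → 0 < ψ x)
    (hψ_mono : MonotoneOn ψ (Ioi 0))
    (hψ_quot : MonotoneOn (fun x => x / ψ x) (Ioi 0))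
    (hψ_int : IntegrableOn (fun ζ : ℝ => min 1 (ζ ^ 2)⁻¹ * |Real.log (ψ (ζ ^ 2))|)
      (Ioi 0))
    (G : ℝ) (hG : G = ∑' n : ℕ, (-1 : ℝ) ^ n / (2 * n + 1) ^ 2) :
    (∀ ξ : ℝ, 0 < ξ →
      Real.exp (-2 * G / π) * Real.sqrt (ψ (ξ ^ 2)) ≤
        Real.exp ((1 / π) * ∫ ζ in Ioi (0:ℝ), Real.log (ψ (ξ ^ 2 * ζ ^ 2)) / (1 + ζ ^ 2)) ∧
      Real.exp ((1 / π) * ∫ ζ in Ioi (0:ℝ), Real.log (ψ (ξ ^ 2 * ζ ^ 2)) / (1 + ζ ^ 2)) ≤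
        Real.exp (2 * G / π) * Real.sqrt (ψ (ξ ^ 2))) ∧
    Real.exp (2 * G / π) ≤ 2 := by
  obtain rfl : G = catalanConstant := hG
  exact ⟨fun ξ hξ => exp_mul_sqrt_le_exp_of_abs_sub_le (hψ_pos _ (by positivity))
      (abs_integral_log_apply_mul_sq_div_sub_le hψ_pos hψ_mono hψ_quot hψ_int (by positivity)),
    exp_two_mul_catalanConstant_div_pi_le_two⟩
end

section
/- Let ψ : (0,∞) → (0,∞) with ψ and ξ/ψ(ξ) nondecreasing, and suppose ψ is regularly varying at infinity with some index α, i.e., for each ζ > 0, ψ(ξζ)/ψ(ξ) → ζ^α as ξ → ∞. Define ψ†(ξ) = exp( (1/π) ∫₀^∞ log ψ(ξ²ζ²)/(1+ζ²) dζ ). Then ψ†(ξ)/√ψ(ξ²) → 1 as ξ → ∞. -/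
open MeasureTheory Real Set Filter Topology

/-!
Write `L = log ∘ ψ`. The two monotonicity hypotheses say that `t ↦ L (exp t)` is nondecreasing
with slope at most `1`, hence `1`-Lipschitz, so `|L (x ζ²) - L x| ≤ 2 |log ζ|`. Since
`∫₀^∞ (1 + ζ²)⁻¹ dζ = π / 2`, the logarithm of `ψ†(ξ) / √ψ(ξ²)` is
`(1 / π) ∫₀^∞ (L (ξ² ζ²) - L (ξ²)) / (1 + ζ²) dζ`. By regular variation the integrand tends to
`2 α log ζ / (1 + ζ²)`, with the integrable majorant `2 |log ζ| / (1 + ζ²)`, and the limit integral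
vanishes by the symmetry `ζ ↦ ζ⁻¹`.
-/

lemma integrableOn_abs_log_div_one_add_sq :
    IntegrableOn (fun ζ : ℝ => |log ζ| / (1 + ζ ^ 2)) (Ioi 0) := by
  have hmeas : AEStronglyMeasurable (fun ζ : ℝ => |log ζ| / (1 + ζ ^ 2)) :=
    (by fun_prop : Measurable fun ζ : ℝ => |log ζ| / (1 + ζ ^ 2)).aestronglyMeasurable
  rw [← Ioc_union_Ioi_eq_Ioi zero_le_one]
  refine IntegrableOn.union ?_ ?_
  · have hlog : IntegrableOn (fun ζ => ‖log ζ‖) (Ioc 0 1) :=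
      ((intervalIntegrable_iff_integrableOn_Ioc_of_le zero_le_one).1
        intervalIntegral.intervalIntegrable_log').norm
    refine hlog.mono' hmeas.restrict (ae_of_all _ fun ζ => ?_)
    rw [norm_div, norm_abs_eq_norm, Real.norm_eq_abs (1 + ζ ^ 2),
      abs_of_pos (by positivity)]
    exact div_le_self (norm_nonneg _) (by nlinarith)
  · refine ((integrableOn_Ioi_rpow_of_lt (a := -(3 / 2)) (by norm_num) one_pos).const_mul 2).mono'
      hmeas.restrict ((ae_restrict_iff' measurableSet_Ioi).2 (ae_of_all _ fun ζ hζ => ?_))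
    have hζ0 : (0 : ℝ) < ζ := one_pos.trans hζ
    have hlog : |log ζ| ≤ ζ ^ (1 / 2 : ℝ) / (1 / 2) := by
      rw [abs_of_nonneg (log_nonneg hζ.le)]
      exact log_le_rpow_div hζ0.le one_half_pos
    have hpow : ζ ^ (-(3 / 2) : ℝ) = ζ ^ (1 / 2 : ℝ) / ζ ^ 2 := by
      rw [← rpow_natCast, ← rpow_sub hζ0]; norm_num
    rw [norm_div, norm_abs_eq_norm, Real.norm_eq_abs, Real.norm_eq_abs (1 + ζ ^ 2),
      abs_of_pos (by positivity : (0 : ℝ) < 1 + ζ ^ 2), hpow]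
    calc |log ζ| / (1 + ζ ^ 2) ≤ ζ ^ (1 / 2 : ℝ) / (1 / 2) / ζ ^ 2 :=
          div_le_div₀ (by positivity) hlog (by positivity) (by linarith)
      _ = 2 * (ζ ^ (1 / 2 : ℝ) / ζ ^ 2) := by ring

lemma integral_log_div_one_add_sq : ∫ ζ in Ioi (0 : ℝ), log ζ / (1 + ζ ^ 2) = 0 := by
  -- the substitution `ζ ↦ ζ⁻¹` maps the integral to its negative
  have h := integral_comp_rpow_Ioi (fun ζ : ℝ => log ζ / (1 + ζ ^ 2)) (p := -1) (by norm_num)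
  have hneg : ∀ ζ ∈ Ioi (0 : ℝ), (|(-1 : ℝ)| * ζ ^ ((-1 : ℝ) - 1)) •
      (log (ζ ^ (-1 : ℝ)) / (1 + (ζ ^ (-1 : ℝ)) ^ 2)) = -(log ζ / (1 + ζ ^ 2)) := by
    intro ζ hζ
    have hζ : (0 : ℝ) < ζ := hζ
    rw [show (-1 : ℝ) - 1 = -(2 : ℕ) by norm_num, rpow_neg hζ.le, rpow_natCast, rpow_neg_one,
      log_inv, smul_eq_mul]
    field_simp
    ring
  rw [setIntegral_congr_fun measurableSet_Ioi hneg, integral_neg] at h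
  linarith

section LogLipschitz

variable {f : ℝ → ℝ}

lemma continuousOn_Ioi_of_lipschitzWith_comp_exp (hf : LipschitzWith 1 fun t => f (exp t)) :
    ContinuousOn f (Ioi 0) :=
  ((hf.continuous.comp_continuousOn continuousOn_log).mono fun _ (hx : 0 < _) => hx.ne').congr
    fun x (hx : (0 : ℝ) < x) => by simp only [Function.comp_apply, exp_log hx]

lemma abs_sub_le_abs_log_of_lipschitzWith_comp_exp (hf : LipschitzWith 1 fun t => f (exp t))
    {x l : ℝ} (hx : 0 < x) (hl : 0 < l) : |f (x * l) - f x| ≤ |log l| := by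
  have h := hf.dist_le_mul (log (x * l)) (log x)
  rwa [exp_log (mul_pos hx hl), exp_log hx, NNReal.coe_one, one_mul, Real.dist_eq, Real.dist_eq,
    log_mul hx.ne' hl.ne', add_sub_cancel_left] at h

lemma aestronglyMeasurable_sub_div_one_add_sq (hf : LipschitzWith 1 fun t => f (exp t))
    {x : ℝ} (hx : 0 < x) :
    AEStronglyMeasurable (fun ζ => (f (x * ζ ^ 2) - f x) / (1 + ζ ^ 2))
      (volume.restrict (Ioi 0)) := by
  refine ContinuousOn.aestronglyMeasurable ?_ measurableSet_Ioi
  refine ContinuousOn.div (ContinuousOn.sub ?_ continuousOn_const) (by fun_prop)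
    fun ζ _ => by positivity
  exact (continuousOn_Ioi_of_lipschitzWith_comp_exp hf).comp (by fun_prop)
    fun ζ (hζ : 0 < ζ) => mul_pos hx (pow_pos hζ 2)

lemma norm_sub_div_one_add_sq_le (hf : LipschitzWith 1 fun t => f (exp t))
    {x : ℝ} (hx : 0 < x) {ζ : ℝ} (hζ : 0 < ζ) :
    ‖(f (x * ζ ^ 2) - f x) / (1 + ζ ^ 2)‖ ≤ 2 * (|log ζ| / (1 + ζ ^ 2)) := by
  have h := abs_sub_le_abs_log_of_lipschitzWith_comp_exp hf hx (pow_pos hζ 2)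
  rw [log_pow, Nat.cast_ofNat, abs_mul, abs_two] at h
  rw [norm_div, Real.norm_eq_abs, Real.norm_eq_abs,
    abs_of_pos (by positivity : (0 : ℝ) < 1 + ζ ^ 2), ← mul_div_assoc]
  gcongr

lemma integrableOn_sub_div_one_add_sq (hf : LipschitzWith 1 fun t => f (exp t))
    {x : ℝ} (hx : 0 < x) :
    IntegrableOn (fun ζ => (f (x * ζ ^ 2) - f x) / (1 + ζ ^ 2)) (Ioi 0) :=
  (integrableOn_abs_log_div_one_add_sq.const_mul 2).mono'
    (aestronglyMeasurable_sub_div_one_add_sq hf hx)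
    ((ae_restrict_iff' measurableSet_Ioi).2
      (ae_of_all _ fun _ hζ => norm_sub_div_one_add_sq_le hf hx hζ))

lemma tendsto_integral_sub_div_one_add_sq (hf : LipschitzWith 1 fun t => f (exp t)) {α : ℝ}
    (hlim : ∀ ζ, 0 < ζ → Tendsto (fun x => f (x * ζ) - f x) atTop (𝓝 (α * log ζ))) :
    Tendsto (fun x => ∫ ζ in Ioi 0, (f (x * ζ ^ 2) - f x) / (1 + ζ ^ 2)) atTop (𝓝 0) := by
  have hzero : ∫ ζ in Ioi (0 : ℝ), α * log (ζ ^ 2) / (1 + ζ ^ 2) = 0 := by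
    simp_rw [log_pow, mul_div_assoc, ← mul_assoc]
    rw [integral_const_mul, integral_log_div_one_add_sq, mul_zero]
  have hdct : Tendsto (fun x => ∫ ζ in Ioi 0, (f (x * ζ ^ 2) - f x) / (1 + ζ ^ 2)) atTop
      (𝓝 (∫ ζ in Ioi (0 : ℝ), α * log (ζ ^ 2) / (1 + ζ ^ 2))) :=
    tendsto_integral_filter_of_dominated_convergence _
      ((eventually_gt_atTop 0).mono fun x hx => aestronglyMeasurable_sub_div_one_add_sq hf hx)
      ((eventually_gt_atTop 0).mono fun x hx => (ae_restrict_iff' measurableSet_Ioi).2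
        (ae_of_all _ fun _ hζ => norm_sub_div_one_add_sq_le hf hx hζ))
      (integrableOn_abs_log_div_one_add_sq.const_mul 2)
      ((ae_restrict_iff' measurableSet_Ioi).2 (ae_of_all _ fun ζ hζ =>
        (hlim (ζ ^ 2) (pow_pos hζ 2)).div_const _))
  rwa [hzero] at hdct

end LogLipschitz

section Dagger

variable {ψ : ℝ → ℝ}

lemma lipschitzWith_log_comp_exp (hψ_pos : ∀ x, 0 < x → 0 < ψ x)
    (hψ_mono : MonotoneOn ψ (Ioi 0)) (hψ_quot : MonotoneOn (fun x => x / ψ x) (Ioi 0)) :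
    LipschitzWith 1 fun t => log (ψ (exp t)) := by
  refine LipschitzWith.of_le_add fun s t => ?_
  have hs := hψ_pos _ (exp_pos s)
  have ht := hψ_pos _ (exp_pos t)
  rcases le_total s t with hst | hts
  · have := log_le_log hs (hψ_mono (exp_pos s) (exp_pos t) (exp_le_exp.2 hst))
    linarith [dist_nonneg (x := s) (y := t)]
  · have hq : exp t / ψ (exp t) ≤ exp s / ψ (exp s) :=
      hψ_quot (exp_pos t) (exp_pos s) (exp_le_exp.2 hts)
    have hle : ψ (exp s) ≤ exp (s - t) * ψ (exp t) := by
      rw [div_le_div_iff₀ ht hs] at hq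
      rw [exp_sub, div_mul_eq_mul_div, le_div_iff₀ (exp_pos t)]
      linarith
    calc log (ψ (exp s)) ≤ log (exp (s - t) * ψ (exp t)) := log_le_log hs hle
      _ = log (ψ (exp t)) + dist s t := by
        rw [log_mul (exp_pos _).ne' ht.ne', log_exp, Real.dist_eq,
          abs_of_nonneg (sub_nonneg.2 hts)]
        ring

lemma tendsto_log_apply_mul_sub_log_apply {α : ℝ} (hψ_pos : ∀ x, 0 < x → 0 < ψ x)
    (hψ_rv : ∀ ζ : ℝ, 0 < ζ → Tendsto (fun ξ => ψ (ξ * ζ) / ψ ξ) atTop (𝓝 (ζ ^ α)))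
    {ζ : ℝ} (hζ : 0 < ζ) :
    Tendsto (fun x => log (ψ (x * ζ)) - log (ψ x)) atTop (𝓝 (α * log ζ)) := by
  rw [← log_rpow hζ]
  refine ((continuousAt_log (rpow_pos_of_pos hζ α).ne').tendsto.comp (hψ_rv ζ hζ)).congr' ?_
  filter_upwards [eventually_gt_atTop 0] with x hx
  exact log_div (hψ_pos _ (mul_pos hx hζ)).ne' (hψ_pos x hx).ne'

lemma exp_integral_div_sqrt_eq {x : ℝ} (hψx : 0 < ψ x)
    (hint : IntegrableOn (fun ζ => (log (ψ (x * ζ ^ 2)) - log (ψ x)) / (1 + ζ ^ 2)) (Ioi 0)) :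
    exp ((1 / π) * ∫ ζ in Ioi (0 : ℝ), log (ψ (x * ζ ^ 2)) / (1 + ζ ^ 2)) / sqrt (ψ x)
      = exp ((1 / π) *
          ∫ ζ in Ioi (0 : ℝ), (log (ψ (x * ζ ^ 2)) - log (ψ x)) / (1 + ζ ^ 2)) := by
  have hconst : IntegrableOn (fun ζ : ℝ => log (ψ x) * (1 + ζ ^ 2)⁻¹) (Ioi 0) :=
    integrable_inv_one_add_sq.integrableOn.const_mul _
  have hsplit : ∫ ζ in Ioi (0 : ℝ), log (ψ (x * ζ ^ 2)) / (1 + ζ ^ 2)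
      = (∫ ζ in Ioi (0 : ℝ), (log (ψ (x * ζ ^ 2)) - log (ψ x)) / (1 + ζ ^ 2))
        + log (ψ x) * (π / 2) := by
    have hpi : ∫ ζ in Ioi (0 : ℝ), (1 + ζ ^ 2)⁻¹ = π / 2 := by
      rw [integral_Ioi_inv_one_add_sq, arctan_zero, sub_zero]
    rw [← hpi, ← integral_const_mul, ← integral_add hint hconst]
    congr 1 with ζ
    field_simp
    ring
  rw [hsplit, sqrt_eq_rpow, rpow_def_of_pos hψx, ← exp_sub]
  congr 1
  field_simp
  ring

end Dagger

theorem dagger_regular_variation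
    (ψ : ℝ → ℝ) (α : ℝ) (hψ_pos : ∀ x, 0 < x → 0 < ψ x)
    (hψ_mono : MonotoneOn ψ (Ioi 0))
    (hψ_quot : MonotoneOn (fun x => x / ψ x) (Ioi 0))
    (hψ_rv : ∀ ζ : ℝ, 0 < ζ →
      Tendsto (fun ξ => ψ (ξ * ζ) / ψ ξ) atTop (nhds (ζ ^ α))) :
    Tendsto (fun ξ : ℝ =>
        Real.exp ((1 / π) * ∫ ζ in Ioi (0:ℝ), Real.log (ψ (ξ ^ 2 * ζ ^ 2)) / (1 + ζ ^ 2))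
          / Real.sqrt (ψ (ξ ^ 2)))
      atTop (nhds 1) := by
  set L : ℝ → ℝ := fun x => log (ψ x)
  have hlip : LipschitzWith 1 fun t => L (exp t) :=
    lipschitzWith_log_comp_exp hψ_pos hψ_mono hψ_quot
  have hI := (tendsto_integral_sub_div_one_add_sq hlip
    fun ζ hζ => tendsto_log_apply_mul_sub_log_apply hψ_pos hψ_rv hζ).comp
    (tendsto_pow_atTop two_ne_zero)
  have hexp := (continuous_exp.tendsto 0).comp (mul_zero (1 / π) ▸ hI.const_mul (1 / π))
  rw [exp_zero] at hexp
  refine hexp.congr' ?_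
  filter_upwards [eventually_gt_atTop 0] with ξ hξ
  have hξ2 : 0 < ξ ^ 2 := pow_pos hξ 2
  exact (exp_integral_div_sqrt_eq (hψ_pos _ hξ2) (integrableOn_sub_div_one_add_sq hlip hξ2)).symm
end

section
/- For λ > 0 and ξ > 0, (1/π) ∫₀^∞ ξ·log|1 − ζ²/λ²| / (ξ² + ζ²) dζ = (1/2)·log(1 + ξ²/λ²). -/
/-!
Substituting `ζ = ξ tan φ` turns the Poisson kernel `ξ dζ / (ξ² + ζ²)` on `(0, ∞)` into `dφ` on
`(0, π/2)`. With `a = ξ / λ` and `α = arctan a`,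
`1 - a² tan² φ = (1 + a²) cos (φ + α) cos (φ - α) / cos² φ`,
and the integrals of `log |cos (φ + α)|` and `log |cos (φ - α)|` over `(0, π/2)` add up to an
integral of `log |cos|` over a full period, which is `-π log 2` whatever `α` is. The same holds for
`2 log |cos φ|` (the case `α = 0`), so only the constant term `log (1 + a²)` survives.
-/

open MeasureTheory Real Set

theorem cos_sub_mul_sin_eq_sqrt_mul_cos_add_arctan (a φ : ℝ) :
    cos φ - a * sin φ = √(1 + a ^ 2) * cos (φ + arctan a) := by
  have h : √(1 + a ^ 2) ≠ 0 := by positivity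
  rw [cos_add, cos_arctan, sin_arctan]
  field_simp

theorem cos_add_mul_sin_eq_sqrt_mul_cos_sub_arctan (a φ : ℝ) :
    cos φ + a * sin φ = √(1 + a ^ 2) * cos (φ - arctan a) := by
  have h : √(1 + a ^ 2) ≠ 0 := by positivity
  rw [cos_sub, cos_arctan, sin_arctan]
  field_simp

theorem log_abs_one_sub_sq_mul_tan_eq {a φ : ℝ} (hφ : cos φ ≠ 0)
    (hplus : cos (φ + arctan a) ≠ 0) (hminus : cos (φ - arctan a) ≠ 0) :
    log |1 - (a * tan φ) ^ 2| = log (1 + a ^ 2)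
      + (log (cos (φ + arctan a)) + log (cos (φ - arctan a))) - 2 * log (cos φ) := by
  have hfactor : 1 - (a * tan φ) ^ 2
      = (1 + a ^ 2) * (cos (φ + arctan a) * cos (φ - arctan a)) / cos φ ^ 2 := calc
    1 - (a * tan φ) ^ 2 = (cos φ - a * sin φ) * (cos φ + a * sin φ) / cos φ ^ 2 := by
      rw [tan_eq_sin_div_cos]; field_simp; ring
    _ = _ := by
      rw [cos_sub_mul_sin_eq_sqrt_mul_cos_add_arctan, cos_add_mul_sin_eq_sqrt_mul_cos_sub_arctan,
        mul_mul_mul_comm, ← sq, sq_sqrt (by positivity : 0 ≤ 1 + a ^ 2)]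
  rw [log_abs, hfactor, log_div (by positivity) (pow_ne_zero 2 hφ),
    log_mul (by positivity) (mul_ne_zero hplus hminus), log_mul hplus hminus, log_pow]
  push_cast
  ring

theorem ae_cos_add_ne_zero (c : ℝ) : ∀ᵐ x : ℝ, cos (x + c) ≠ 0 := by
  have hcount : {x : ℝ | cos (x + c) = 0}.Countable := by
    refine (countable_range fun k : ℤ => (2 * k + 1) * π / 2 - c).mono fun x hx => ?_
    obtain ⟨k, hk⟩ := cos_eq_zero_iff.mp hx
    exact ⟨k, by simp only [← hk]; ring⟩
  exact measure_eq_zero_iff_ae_notMem.mp (hcount.measure_zero volume)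

theorem integral_log_cos_period (c : ℝ) : ∫ x in c..c + π, log (cos x) = -log 2 * π := by
  have hper : Function.Periodic (fun x => log (cos x)) π := fun x => by
    simp only [cos_add_pi, log_neg_eq_log]
  rw [hper.intervalIntegral_add_eq c (-(π / 2)), ← integral_log_sin_zero_pi]
  simp only [← sin_add_pi_div_two, intervalIntegral.integral_comp_add_right (fun x => log (sin x))]
  congr 1 <;> ring

theorem integral_log_cos_add_add_log_cos_sub (α : ℝ) :
    ∫ φ in 0..π / 2, (log (cos (φ + α)) + log (cos (φ - α))) = -log 2 * π := by
  have hint : ∀ a b : ℝ, IntervalIntegrable (fun x => log (cos x)) volume a b :=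
    fun _ _ => intervalIntegrable_log_cos
  have hplus : IntervalIntegrable (fun φ => log (cos (φ + α))) volume 0 (π / 2) := by
    simpa using (hint (0 + α) (π / 2 + α)).comp_add_right α
  have hminus : IntervalIntegrable (fun φ => log (cos (φ - α))) volume 0 (π / 2) := by
    simpa using (hint (0 - α) (π / 2 - α)).comp_sub_right α
  have hreflect : ∫ φ in 0..π / 2, log (cos (φ - α)) = ∫ x in α - π / 2..α, log (cos x) := by
    rw [intervalIntegral.integral_comp_sub_right (fun x => log (cos x))]
    simpa only [cos_neg, neg_sub, sub_neg_eq_add, zero_sub, neg_neg] using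
      (intervalIntegral.integral_comp_neg (a := α - π / 2) (b := α) fun x => log (cos x)).symm
  rw [intervalIntegral.integral_add hplus hminus, hreflect,
    intervalIntegral.integral_comp_add_right (fun x => log (cos x)), zero_add, add_comm,
    intervalIntegral.integral_add_adjacent_intervals (hint _ _) (hint _ _),
    ← integral_log_cos_period (α - π / 2)]
  congr 1
  ring

theorem integral_log_abs_one_sub_sq_mul_tan (a : ℝ) :
    ∫ φ in 0..π / 2, log |1 - (a * tan φ) ^ 2| = π / 2 * log (1 + a ^ 2) := by
  have hshift : ∀ c : ℝ, IntervalIntegrable (fun φ => log (cos (φ + c))) volume 0 (π / 2) :=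
    fun c => by
      simpa using (intervalIntegrable_log_cos (a := 0 + c) (b := π / 2 + c)).comp_add_right c
  have hpair : IntervalIntegrable
      (fun φ => log (cos (φ + arctan a)) + log (cos (φ - arctan a))) volume 0 (π / 2) :=
    (hshift _).add (by simpa only [sub_eq_add_neg] using hshift (-arctan a))
  have hcos : ∫ φ in 0..π / 2, log (cos φ) = -log 2 * π / 2 := by
    have := integral_log_cos_add_add_log_cos_sub 0
    simp only [add_zero, sub_zero, ← two_mul, intervalIntegral.integral_const_mul] at this
    linarith
  calc ∫ φ in 0..π / 2, log |1 - (a * tan φ) ^ 2|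
      = ∫ φ in 0..π / 2, (log (1 + a ^ 2)
          + (log (cos (φ + arctan a)) + log (cos (φ - arctan a))) - 2 * log (cos φ)) := by
        refine intervalIntegral.integral_congr_ae ?_
        filter_upwards [ae_cos_add_ne_zero 0, ae_cos_add_ne_zero (arctan a),
          ae_cos_add_ne_zero (-arctan a)] with φ hφ hplus hminus _
        rw [add_zero] at hφ
        rw [← sub_eq_add_neg] at hminus
        exact log_abs_one_sub_sq_mul_tan_eq hφ hplus hminus
    _ = π / 2 * log (1 + a ^ 2) + -log 2 * π - 2 * (-log 2 * π / 2) := by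
        rw [intervalIntegral.integral_sub, intervalIntegral.integral_add,
          intervalIntegral.integral_const, intervalIntegral.integral_const_mul,
          integral_log_cos_add_add_log_cos_sub, hcos, sub_zero, smul_eq_mul]
        · exact intervalIntegrable_const
        · exact hpair
        · exact intervalIntegrable_const.add hpair
        · exact intervalIntegrable_log_cos.const_mul 2
    _ = π / 2 * log (1 + a ^ 2) := by ring

theorem integral_Ioi_smul_eq_integral_comp_mul_tan {E : Type*} [NormedAddCommGroup E]
    [NormedSpace ℝ E] {ξ : ℝ} (hξ : 0 < ξ) (g : ℝ → E) :
    ∫ ζ in Ioi 0, (ξ / (ξ ^ 2 + ζ ^ 2)) • g ζ = ∫ φ in 0..π / 2, g (ξ * tan φ) := by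
  have hcos : ∀ φ ∈ Ioo 0 (π / 2), 0 < cos φ := fun φ hφ =>
    cos_pos_of_mem_Ioo ⟨by linarith [hφ.1, pi_pos], hφ.2⟩
  have himage : (fun φ => ξ * tan φ) '' Ioo 0 (π / 2) = Ioi 0 := by
    ext ζ
    constructor
    · rintro ⟨φ, hφ, rfl⟩
      exact mul_pos hξ (tan_pos_of_pos_of_lt_pi_div_two hφ.1 hφ.2)
    · intro hζ
      refine ⟨arctan (ζ / ξ), ⟨arctan_pos.2 (div_pos hζ hξ), arctan_lt_pi_div_two _⟩, ?_⟩
      simp only [tan_arctan]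
      field_simp
  have hderiv : ∀ φ ∈ Ioo 0 (π / 2),
      HasDerivWithinAt (fun φ => ξ * tan φ) (ξ * (1 / cos φ ^ 2)) (Ioo 0 (π / 2)) φ :=
    fun φ hφ => ((hasDerivAt_tan (hcos φ hφ).ne').const_mul ξ).hasDerivWithinAt
  have hinj : InjOn (fun φ => ξ * tan φ) (Ioo 0 (π / 2)) := fun x hx y hy hxy =>
    injOn_tan (Ioo_subset_Ioo (by linarith [pi_pos]) le_rfl hx)
      (Ioo_subset_Ioo (by linarith [pi_pos]) le_rfl hy) (mul_left_cancel₀ hξ.ne' hxy)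
  rw [← himage, integral_image_eq_integral_abs_deriv_smul measurableSet_Ioo hderiv hinj,
    intervalIntegral.integral_of_le (by positivity), integral_Ioc_eq_integral_Ioo]
  refine setIntegral_congr_fun measurableSet_Ioo fun φ hφ => ?_
  have hc := hcos φ hφ
  have hjacobian : |ξ * (1 / cos φ ^ 2)| * (ξ / (ξ ^ 2 + (ξ * tan φ) ^ 2)) = 1 := by
    rw [abs_of_pos (by positivity), tan_eq_sin_div_cos]
    field_simp
    exact (cos_sq_add_sin_sq φ).symm
  rw [smul_smul, hjacobian, one_smul]

theorem integral_log_abs_one_sub_sq :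
    ∀ (lam ξ : ℝ), 0 < lam → 0 < ξ →
      (1 / π) * ∫ ζ in Ioi (0:ℝ), ξ * Real.log |1 - ζ ^ 2 / lam ^ 2| / (ξ ^ 2 + ζ ^ 2)
        = (1 / 2) * Real.log (1 + ξ ^ 2 / lam ^ 2) := by
  intro lam ξ _ hξ
  have hkernel : ∀ ζ, ξ * log |1 - ζ ^ 2 / lam ^ 2| / (ξ ^ 2 + ζ ^ 2)
      = (ξ / (ξ ^ 2 + ζ ^ 2)) • log |1 - ζ ^ 2 / lam ^ 2| := fun ζ => by
    rw [smul_eq_mul]; ring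
  have hscale : ∀ φ, (ξ * tan φ) ^ 2 / lam ^ 2 = (ξ / lam * tan φ) ^ 2 := fun φ => by ring
  simp only [hkernel, integral_Ioi_smul_eq_integral_comp_mul_tan hξ, hscale,
    integral_log_abs_one_sub_sq_mul_tan, div_pow]
  field_simp
end

section
/- Let V : (0,∞) → [0,∞) be nondecreasing and subadditive with V(0)=0, and suppose there is a function ψ > 0 on (0,∞) such that the Laplace transform satisfies e^{-2G/π}/(ξ√ψ(ξ²)) ≤ LV(ξ) ≤ e^{2G/π}/(ξ√ψ(ξ²)) for all ξ > 0, where G is the Catalan constant. Then (1/5)·(1/√ψ(1/x²)) ≤ V(x) ≤ 5·(1/√ψ(1/x²)) for all x > 0. -/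
/-!
Both bounds compare `V x` with the Laplace transform at `ξ = 1 / x`. Monotonicity gives
`V x * x / e ≤ ∫_x^∞ e^{-t/x} V t ≤ LV(1/x)`, while subadditivity gives `V t ≤ (1 + t/x) V x`,
hence `LV(1/x) ≤ 2 x V x`. The Catalan constant only enters through `e^{2G/π} ≤ 5/e`, which follows
from the alternating-series bound `G ≤ 1 - 1/9 + 1/25`.
-/

open MeasureTheory Real Set

theorem catalan_le : ∑' n : ℕ, (-1 : ℝ) ^ n / (2 * n + 1) ^ 2 ≤ 209 / 225 := by
  set f : ℕ → ℝ := fun n ↦ 1 / (2 * n + 1) ^ 2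
  have hf_anti : Antitone f := fun m n hmn ↦ by simp only [f]; gcongr
  have hsum : Summable fun n : ℕ ↦ (-1 : ℝ) ^ n * f n := by
    refine .of_norm_bounded ((summable_nat_add_iff 1).2 (summable_nat_pow_inv.2 one_lt_two))
      fun n ↦ ?_
    rw [norm_mul, norm_pow, norm_neg, norm_one, one_pow, one_mul,
      Real.norm_of_nonneg (by positivity)]
    push_cast
    simp only [f, one_div]
    gcongr
    linarith
  have := hf_anti.tendsto_le_alternating_series hsum.hasSum.tendsto_sum_nat 1
  simp only [f, mul_one_div] at this
  norm_num [Finset.sum_range_succ] at this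
  linarith

theorem exp_eight_fifths_le : exp (8 / 5) ≤ 5 := by
  have h := Real.exp_bound' (x := 3 / 5) (by norm_num) (by norm_num) (n := 5) (by norm_num)
  norm_num [Finset.sum_range_succ, Nat.factorial] at h
  have := Real.exp_one_lt_d9
  rw [show (8 / 5 : ℝ) = 1 + 3 / 5 by norm_num, exp_add]
  nlinarith [exp_pos 1, exp_pos (3 / 5)]

theorem exp_one_add_two_mul_catalan_div_pi_le :
    exp (1 + 2 * (∑' n : ℕ, (-1 : ℝ) ^ n / (2 * n + 1) ^ 2) / π) ≤ 5 := by
  have : 2 * (∑' n : ℕ, (-1 : ℝ) ^ n / (2 * n + 1) ^ 2) / π ≤ 3 / 5 := by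
    rw [div_le_iff₀ pi_pos]; nlinarith [catalan_le, pi_gt_d2]
  exact (exp_le_exp.2 (by linarith)).trans exp_eight_fifths_le

theorem integral_exp_neg_mul_Ioi {ξ : ℝ} (hξ : 0 < ξ) (a : ℝ) :
    ∫ t in Ioi a, exp (-ξ * t) = exp (-ξ * a) / ξ := by
  rw [integral_exp_mul_Ioi (neg_lt_zero.2 hξ), neg_div_neg_eq]

theorem integral_mul_exp_neg_mul_Ioi {ξ : ℝ} (hξ : 0 < ξ) :
    ∫ t in Ioi 0, t * exp (-ξ * t) = 1 / ξ ^ 2 := by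
  have := integral_rpow_mul_exp_neg_mul_Ioi (a := 2) two_pos hξ
  norm_num [Gamma_two] at this
  simpa [neg_mul, one_div] using this

theorem integrableOn_mul_exp_neg_mul_Ioi {ξ : ℝ} (hξ : 0 < ξ) :
    IntegrableOn (fun t ↦ t * exp (-ξ * t)) (Ioi 0) :=
  .of_integral_ne_zero (by rw [integral_mul_exp_neg_mul_Ioi hξ]; positivity)

noncomputable def laplaceTransform (f : ℝ → ℝ) (ξ : ℝ) : ℝ :=
  ∫ t in Ioi 0, exp (-ξ * t) * f t

theorem le_exp_mul_laplaceTransform {f : ℝ → ℝ} {a ξ : ℝ} (ha : 0 ≤ a) (hξ : 0 < ξ)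
    (hf_mono : MonotoneOn f (Ici a)) (hf_nonneg : ∀ t, 0 < t → 0 ≤ f t)
    (hf_int : IntegrableOn (fun t ↦ exp (-ξ * t) * f t) (Ioi 0)) :
    f a ≤ exp (a * ξ) * ξ * laplaceTransform f ξ := by
  have hfa : f a * (exp (-ξ * a) / ξ) ≤ laplaceTransform f ξ :=
    calc f a * (exp (-ξ * a) / ξ) = ∫ t in Ioi a, exp (-ξ * t) * f a := by
          rw [integral_mul_const, integral_exp_neg_mul_Ioi hξ, mul_comm]
      _ ≤ ∫ t in Ioi a, exp (-ξ * t) * f t :=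
          setIntegral_mono_on ((exp_neg_integrableOn_Ioi a hξ).mul_const _)
            (hf_int.mono_set (Ioi_subset_Ioi ha)) measurableSet_Ioi
            fun t ht ↦ by gcongr; exact hf_mono self_mem_Ici (mem_Ici.2 ht.le) ht.le
      _ ≤ laplaceTransform f ξ :=
          setIntegral_mono_set hf_int
            ((ae_restrict_iff' measurableSet_Ioi).2 (.of_forall fun t ht ↦
              mul_nonneg (exp_pos _).le (hf_nonneg t ht)))
            (Ioi_subset_Ioi ha).eventuallyLE
  calc f a = exp (a * ξ) * ξ * (f a * (exp (-ξ * a) / ξ)) := by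
        rw [neg_mul, exp_neg, mul_comm ξ a]; field_simp
    _ ≤ exp (a * ξ) * ξ * laplaceTransform f ξ := by gcongr

theorem laplaceTransform_le {f : ℝ → ℝ} {a ξ : ℝ} (ha : 0 < a) (hξ : 0 < ξ)
    (hf : ∀ t, 0 < t → f t ≤ (1 + t / a) * f a)
    (hf_int : IntegrableOn (fun t ↦ exp (-ξ * t) * f t) (Ioi 0)) :
    laplaceTransform f ξ ≤ f a * (1 / ξ + 1 / (a * ξ ^ 2)) := by
  have hexp := exp_neg_integrableOn_Ioi 0 hξ
  have hmul := integrableOn_mul_exp_neg_mul_Ioi hξ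
  calc laplaceTransform f ξ
      ≤ ∫ t in Ioi 0, f a * exp (-ξ * t) + f a / a * (t * exp (-ξ * t)) :=
        setIntegral_mono_on hf_int ((hexp.const_mul _).add (hmul.const_mul _)) measurableSet_Ioi
          fun t ht ↦ by
            calc exp (-ξ * t) * f t ≤ exp (-ξ * t) * ((1 + t / a) * f a) := by
                  gcongr; exact hf t ht
              _ = _ := by ring
    _ = f a * (1 / ξ + 1 / (a * ξ ^ 2)) := by
        rw [integral_add (hexp.const_mul _) (hmul.const_mul _), integral_const_mul,
          integral_const_mul, integral_exp_neg_mul_Ioi hξ, integral_mul_exp_neg_mul_Ioi hξ,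
          mul_zero, exp_zero]
        field_simp

theorem le_nat_mul_of_subadditive {V : ℝ → ℝ}
    (hV_subadd : ∀ x y : ℝ, 0 ≤ x → 0 ≤ y → V (x + y) ≤ V x + V y) {x : ℝ} (hx : 0 ≤ x)
    {n : ℕ} (hn : 1 ≤ n) :
    V (n * x) ≤ n * V x := by
  induction n, hn using Nat.le_induction with
  | base => simp
  | succ n hn ih =>
    calc V ((n + 1 : ℕ) * x) = V (n * x + x) := by push_cast; ring_nf
      _ ≤ V (n * x) + V x := hV_subadd _ _ (by positivity) hx
      _ ≤ (n + 1 : ℕ) * V x := by push_cast; linarith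

theorem le_one_add_div_mul_of_subadditive {V : ℝ → ℝ}
    (hV_subadd : ∀ x y : ℝ, 0 ≤ x → 0 ≤ y → V (x + y) ≤ V x + V y)
    (hV_mono : MonotoneOn V (Ici 0)) {x t : ℝ} (hx : 0 < x) (hVx : 0 ≤ V x) (ht : 0 < t) :
    V t ≤ (1 + t / x) * V x := by
  set n := ⌈t / x⌉₊
  have htn : t ≤ n * x := (div_le_iff₀ hx).1 (Nat.le_ceil _)
  calc V t ≤ V (n * x) := hV_mono (mem_Ici.2 ht.le) (mem_Ici.2 (ht.le.trans htn)) htn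
    _ ≤ n * V x := le_nat_mul_of_subadditive hV_subadd hx.le (Nat.ceil_pos.2 (by positivity))
    _ ≤ (1 + t / x) * V x := by
        gcongr
        linarith [Nat.ceil_lt_add_one (by positivity : 0 ≤ t / x)]

theorem renewal_function_estimate_general
    (V ψ : ℝ → ℝ) (G : ℝ)
    (hG : G = ∑' n : ℕ, (-1 : ℝ) ^ n / (2 * n + 1) ^ 2)
    (hV_nonneg : ∀ x, 0 < x → 0 ≤ V x)
    (hV_mono : MonotoneOn V (Ici 0))
    (hV_subadd : ∀ x y : ℝ, 0 ≤ x → 0 ≤ y → V (x + y) ≤ V x + V y)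
    (hψ_pos : ∀ x, 0 < x → 0 < ψ x)
    (hLV : ∀ ξ : ℝ, 0 < ξ →
      Real.exp (-2 * G / π) / (ξ * Real.sqrt (ψ (ξ ^ 2))) ≤
        (∫ x in Ioi (0:ℝ), Real.exp (-ξ * x) * V x) ∧
      (∫ x in Ioi (0:ℝ), Real.exp (-ξ * x) * V x) ≤
        Real.exp (2 * G / π) / (ξ * Real.sqrt (ψ (ξ ^ 2)))) :
    ∀ x : ℝ, 0 < x →
      (1 / 5) * (1 / Real.sqrt (ψ (1 / x ^ 2))) ≤ V x ∧
      V x ≤ 5 * (1 / Real.sqrt (ψ (1 / x ^ 2))) := by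
  intro x hx
  have hc : exp (1 + 2 * G / π) ≤ 5 := hG ▸ exp_one_add_two_mul_catalan_div_pi_le
  have hξ : 0 < x⁻¹ := inv_pos.2 hx
  obtain ⟨hlo, hhi⟩ := hLV x⁻¹ hξ
  rw [show x⁻¹ ^ 2 = 1 / x ^ 2 by rw [inv_pow, one_div]] at hlo hhi
  set S := sqrt (ψ (1 / x ^ 2))
  have hS : 0 < S := sqrt_pos.2 (hψ_pos _ (by positivity))
  have hint : IntegrableOn (fun t ↦ exp (-x⁻¹ * t) * V t) (Ioi 0) :=
    .of_integral_ne_zero (lt_of_lt_of_le (div_pos (exp_pos _) (mul_pos hξ hS)) hlo).ne'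
  have hupper := le_exp_mul_laplaceTransform hx.le hξ (hV_mono.mono (Ici_subset_Ici.2 hx.le))
    hV_nonneg hint
  have hlower := laplaceTransform_le hx hξ
    (fun t ht ↦ le_one_add_div_mul_of_subadditive hV_subadd hV_mono hx (hV_nonneg x hx) ht) hint
  unfold laplaceTransform at hupper hlower
  rw [mul_inv_cancel₀ hx.ne'] at hupper
  constructor
  · have hexp_neg : 2 / 5 ≤ exp (-2 * G / π) := by
      have : exp 1 = exp (1 + 2 * G / π) * exp (-2 * G / π) := by rw [← exp_add]; ring_nf
      nlinarith [add_one_le_exp 1, exp_pos (-2 * G / π)]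
    have hLx : exp (-2 * G / π) * x / S ≤ 2 * x * V x := by
      calc exp (-2 * G / π) * x / S = exp (-2 * G / π) / (x⁻¹ * S) := by field_simp
        _ ≤ V x * (1 / x⁻¹ + 1 / (x * x⁻¹ ^ 2)) := hlo.trans hlower
        _ = 2 * x * V x := by field_simp; ring
    calc 1 / 5 * (1 / S) = 2 / 5 * x / S / (2 * x) := by field_simp
      _ ≤ exp (-2 * G / π) * x / S / (2 * x) := by gcongr
      _ ≤ V x := by rw [div_le_iff₀ (by positivity)]; linarith
  · calc V x ≤ exp 1 * x⁻¹ * (exp (2 * G / π) / (x⁻¹ * S)) := hupper.trans (by gcongr)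
      _ = exp (1 + 2 * G / π) / S := by rw [exp_add]; field_simp
      _ ≤ 5 * (1 / S) := by rw [mul_one_div]; gcongr

theorem renewal_function_estimate
    (V ψ : ℝ → ℝ) (G : ℝ)
    (hG : G = ∑' n : ℕ, (-1 : ℝ) ^ n / (2 * n + 1) ^ 2)
    (hV_nonneg : ∀ x, 0 < x → 0 ≤ V x)
    (hV_mono : MonotoneOn V (Ici 0))
    (hV_subadd : ∀ x y : ℝ, 0 ≤ x → 0 ≤ y → V (x + y) ≤ V x + V y)
    (hV0 : V 0 = 0)
    (hψ_pos : ∀ x, 0 < x → 0 < ψ x)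
    (hLV : ∀ ξ : ℝ, 0 < ξ →
      Real.exp (-2 * G / π) / (ξ * Real.sqrt (ψ (ξ ^ 2))) ≤
        (∫ x in Ioi (0:ℝ), Real.exp (-ξ * x) * V x) ∧
      (∫ x in Ioi (0:ℝ), Real.exp (-ξ * x) * V x) ≤
        Real.exp (2 * G / π) / (ξ * Real.sqrt (ψ (ξ ^ 2)))) :
    ∀ x : ℝ, 0 < x →
      (1 / 5) * (1 / Real.sqrt (ψ (1 / x ^ 2))) ≤ V x ∧
      V x ≤ 5 * (1 / Real.sqrt (ψ (1 / x ^ 2))) :=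
  renewal_function_estimate_general V ψ G hG hV_nonneg hV_mono hV_subadd hψ_pos hLV
end

section
/- Let κ : (0,∞) → (0,∞) be nondecreasing and suppose there are c > 0 and ϱ ∈ (0,1) with κ(λz) ≤ c·λ^ϱ·κ(z) for all λ ≥ 1 and z > 0. Let V : (0,∞) → [0,∞). Suppose P : (0,∞)×(0,∞) → [0,1] satisfies the two-sided bound of Theorem 3.1: P(t,x) ≤ min(1, (e/(e−1))·κ(1/t)·V(x)) and P(t,x) ≥ min(C₁, C₂(t)·κ(1/t)·V(x)) with C₂(t) = z(t)·t/(2e) where κ(z(t))/z(t) = (4e²/(e−1))·K(1/t), K(s) = ∫ₛ^∞ κ(z)/z² dz. Then z(t)·t ≥ c₄ > 0 for a constant c₄ depending only on c and ϱ, and consequently C(κ)·min(1, κ(1/t)V(x)) ≤ P(t,x) ≤ min(1, 2κ(1/t)V(x)) for all t, x > 0. -/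
/-!
Comparing `κ w` with `c (w/s)^ϱ κ s` shows `K(s) ≤ c/(1-ϱ) · κ(s)/s`. Put `s = 1/t`: the defining
equation of `z = z(t)` then bounds `κ(z)/z` by a constant times `κ(s)/s`, while scaling from `z` up
to `s` gives `κ(s) ≤ c (s/z)^ϱ κ(z)`. Together, `1 ≤ const · (z/s)^(1-ϱ)`, a lower bound for
`z(t)·t = z/s` depending only on `c` and `ϱ`. The two-sided estimate for `P` follows, using
`e/(e-1) ≤ 2` for the upper bound.
-/

open MeasureTheory Real Set

lemma div_sq_le_of_scaling {κ : ℝ → ℝ} {c ϱ s w : ℝ} (hs : 0 < s) (hsw : s ≤ w)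
    (hscal : ∀ lam : ℝ, 1 ≤ lam → κ (lam * s) ≤ c * lam ^ ϱ * κ s) :
    κ w / w ^ 2 ≤ c * κ s / s ^ ϱ * w ^ (ϱ - 2) := by
  have hw : 0 < w := hs.trans_le hsw
  have h := hscal (w / s) ((one_le_div hs).2 hsw)
  rw [div_mul_cancel₀ _ hs.ne', div_rpow hw.le hs.le] at h
  calc κ w / w ^ 2 ≤ c * (w ^ ϱ / s ^ ϱ) * κ s / w ^ 2 := by gcongr
    _ = c * κ s / s ^ ϱ * w ^ (ϱ - 2) := by
      rw [rpow_sub hw, rpow_two]; ring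

lemma integral_Ioi_rpow_sub_two {ϱ s : ℝ} (hϱ : ϱ < 1) (hs : 0 < s) :
    ∫ w in Ioi s, w ^ (ϱ - 2) = s ^ (ϱ - 1) / (1 - ϱ) := by
  rw [integral_Ioi_rpow_of_lt (by linarith) hs, show ϱ - 2 + 1 = ϱ - 1 by ring, neg_div,
    ← div_neg, neg_sub]

lemma setIntegral_Ioi_div_sq_le_of_scaling {κ : ℝ → ℝ} {c ϱ s : ℝ} (hϱ : ϱ < 1) (hs : 0 < s)
    (hscal : ∀ lam : ℝ, 1 ≤ lam → κ (lam * s) ≤ c * lam ^ ϱ * κ s)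
    (hint : IntegrableOn (fun w => κ w / w ^ 2) (Ioi s)) :
    ∫ w in Ioi s, κ w / w ^ 2 ≤ c / (1 - ϱ) * (κ s / s) := by
  calc ∫ w in Ioi s, κ w / w ^ 2
      ≤ ∫ w in Ioi s, c * κ s / s ^ ϱ * w ^ (ϱ - 2) :=
        setIntegral_mono_on hint ((integrableOn_Ioi_rpow_of_lt (by linarith) hs).const_mul _)
          measurableSet_Ioi fun w hw => div_sq_le_of_scaling hs (le_of_lt hw) hscal
    _ = c * κ s / s ^ ϱ * (s ^ (ϱ - 1) / (1 - ϱ)) := by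
        rw [integral_const_mul, integral_Ioi_rpow_sub_two hϱ hs]
    _ = c / (1 - ϱ) * (κ s / s) := by
        rw [rpow_sub_one hs.ne']
        field_simp [(rpow_pos_of_pos hs ϱ).ne']

lemma rpow_inv_le_div_of_scaling {a b z s M c ϱ : ℝ} (hϱ : ϱ < 1) (ha : 0 < a) (hz : 0 < z)
    (hs : 0 < s) (hM : 0 ≤ M) (hratio : a / z ≤ M * (b / s))
    (hscal : b ≤ c * (s / z) ^ ϱ * a) :
    (M * c)⁻¹ ^ (1 - ϱ)⁻¹ ≤ z / s := by
  set r := z / s with hr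
  have hr0 : 0 < r := div_pos hz hs
  have hone : 1 ≤ M * c * r ^ (1 - ϱ) := by
    have hsz : (s / z) ^ ϱ = (r ^ ϱ)⁻¹ := by rw [hr, ← inv_div, inv_rpow hr0.le]
    have hsplit : M * (c * (s / z) ^ ϱ * a / s) = M * c * r ^ (1 - ϱ) * (a / z) := by
      rw [hsz, rpow_sub hr0, rpow_one, hr]
      field_simp [(rpow_pos_of_pos hr0 ϱ).ne']
    have h : 1 * (a / z) ≤ M * c * r ^ (1 - ϱ) * (a / z) := by
      rw [one_mul, ← hsplit]
      exact hratio.trans (by gcongr)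
    exact le_of_mul_le_mul_right h (div_pos ha hz)
  have hMc : 0 < M * c * r ^ (1 - ϱ) := zero_lt_one.trans_le hone
  have hMc' : 0 < M * c := pos_of_mul_pos_left hMc (rpow_pos_of_pos hr0 _).le
  calc (M * c)⁻¹ ^ (1 - ϱ)⁻¹ ≤ (r ^ (1 - ϱ)) ^ (1 - ϱ)⁻¹ := by
        gcongr
        rwa [inv_le_iff_one_le_mul₀ hMc', mul_comm]
    _ = r := by rw [← rpow_mul hr0.le, mul_inv_cancel₀ (by linarith), rpow_one]

lemma exp_one_div_exp_one_sub_one_le_two : exp 1 / (exp 1 - 1) ≤ 2 := by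
  have := exp_one_gt_two
  rw [div_le_iff₀ (by linarith)]
  linarith

lemma mul_min_one_le_min_mul {C D k m : ℝ} (hC : 0 ≤ C) (hCD : C ≤ D) (hCk : C ≤ k)
    (hm : 0 ≤ m) : C * min 1 m ≤ min D (k * m) :=
  le_min ((mul_le_of_le_one_right hC (min_le_left _ _)).trans hCD)
    ((mul_le_mul_of_nonneg_left (min_le_right _ _) hC).trans (mul_le_mul_of_nonneg_right hCk hm))

theorem global_scaling_supremum_estimate_general
    (κ V : ℝ → ℝ) (P : ℝ → ℝ → ℝ) (z : ℝ → ℝ) (c ϱ : ℝ)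
    (hc : 0 < c) (hϱ : ϱ ∈ Ioo (0:ℝ) 1)
    (hκ_pos : ∀ s, 0 < s → 0 < κ s)
    (hscal : ∀ lam s : ℝ, 1 ≤ lam → 0 < s → κ (lam * s) ≤ c * lam ^ ϱ * κ s)
    (hKfin : ∀ s : ℝ, 0 < s → IntegrableOn (fun w => κ w / w ^ 2) (Ioi s))
    (hV_nonneg : ∀ x, 0 < x → 0 ≤ V x)
    (hz : ∀ t : ℝ, 0 < t → z t ∈ Ioo 0 (1 / t) ∧
      κ (z t) / z t =
        (4 * Real.exp 1 ^ 2 / (Real.exp 1 - 1)) * ∫ w in Ioi (1 / t), κ w / w ^ 2)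
    (hP_upper : ∀ t x : ℝ, 0 < t → 0 < x →
      P t x ≤ min 1 ((Real.exp 1 / (Real.exp 1 - 1)) * κ (1 / t) * V x))
    (hP_lower : ∀ t x : ℝ, 0 < t → 0 < x →
      min ((Real.exp 1 - 1) / (8 * Real.exp 1 ^ 2))
        ((z t * t / (2 * Real.exp 1)) * κ (1 / t) * V x) ≤ P t x) :
    (∃ c₄ : ℝ, 0 < c₄ ∧ ∀ t : ℝ, 0 < t → c₄ ≤ z t * t) ∧
    (∃ C : ℝ, 0 < C ∧ ∀ t x : ℝ, 0 < t → 0 < x →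
      C * min 1 (κ (1 / t) * V x) ≤ P t x ∧
      P t x ≤ min 1 (2 * κ (1 / t) * V x)) := by
  obtain ⟨-, hϱ1⟩ := hϱ
  have he : 1 < exp 1 := one_lt_exp_iff.2 one_pos
  set A := 4 * exp 1 ^ 2 / (exp 1 - 1)
  have hA : 0 < A := div_pos (by positivity) (by linarith)
  set c₄ := (A * (c / (1 - ϱ)) * c)⁻¹ ^ (1 - ϱ)⁻¹
  have hc₄ : 0 < c₄ := rpow_pos_of_pos (by have := sub_pos.2 hϱ1; positivity) _
  have hzt : ∀ t, 0 < t → c₄ ≤ z t * t := by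
    intro t ht
    obtain ⟨⟨hz0, hz1⟩, hzK⟩ := hz t ht
    have hs : 0 < 1 / t := one_div_pos.2 ht
    have hratio : κ (z t) / z t ≤ A * (c / (1 - ϱ)) * (κ (1 / t) / (1 / t)) := by
      rw [hzK, mul_assoc]
      exact mul_le_mul_of_nonneg_left (setIntegral_Ioi_div_sq_le_of_scaling hϱ1 hs
        (fun lam hlam => hscal lam _ hlam hs) (hKfin _ hs)) hA.le
    have hup := hscal (1 / t / z t) (z t) ((one_le_div hz0).2 hz1.le) hz0
    rw [div_mul_cancel₀ _ hz0.ne'] at hup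
    have hlow := rpow_inv_le_div_of_scaling hϱ1 (hκ_pos _ hz0) hz0 hs (by positivity) hratio hup
    rwa [div_div_eq_mul_div, div_one] at hlow
  refine ⟨⟨c₄, hc₄, hzt⟩, min ((exp 1 - 1) / (8 * exp 1 ^ 2)) (c₄ / (2 * exp 1)),
    lt_min (div_pos (by linarith) (by positivity)) (by positivity), fun t x ht hx => ?_⟩
  have hm : 0 ≤ κ (1 / t) * V x := mul_nonneg (hκ_pos _ (by positivity)).le (hV_nonneg x hx)
  constructor
  · refine (mul_min_one_le_min_mul (k := z t * t / (2 * exp 1))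
      (by positivity) (min_le_left _ _) ?_ hm).trans ?_
    · exact (min_le_right _ _).trans (by gcongr; exact hzt t ht)
    · simpa only [mul_assoc] using hP_lower t x ht hx
  · refine (hP_upper t x ht hx).trans (min_le_min le_rfl ?_)
    simp only [mul_assoc]
    exact mul_le_mul_of_nonneg_right exp_one_div_exp_one_sub_one_le_two hm

theorem global_scaling_supremum_estimate
    (κ V : ℝ → ℝ) (P : ℝ → ℝ → ℝ) (z : ℝ → ℝ) (c ϱ : ℝ)
    (hc : 0 < c) (hϱ : ϱ ∈ Ioo (0:ℝ) 1)
    (hκ_pos : ∀ s, 0 < s → 0 < κ s)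
    (hκ_mono : MonotoneOn κ (Ioi 0))
    (hscal : ∀ lam s : ℝ, 1 ≤ lam → 0 < s → κ (lam * s) ≤ c * lam ^ ϱ * κ s)
    (hKfin : ∀ s : ℝ, 0 < s → IntegrableOn (fun w => κ w / w ^ 2) (Ioi s))
    (hV_nonneg : ∀ x, 0 < x → 0 ≤ V x)
    (hz : ∀ t : ℝ, 0 < t → z t ∈ Ioo 0 (1 / t) ∧
      κ (z t) / z t =
        (4 * Real.exp 1 ^ 2 / (Real.exp 1 - 1)) * ∫ w in Ioi (1 / t), κ w / w ^ 2)
    (hP_range : ∀ t x : ℝ, 0 < t → 0 < x → P t x ∈ Icc (0:ℝ) 1)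
    (hP_upper : ∀ t x : ℝ, 0 < t → 0 < x →
      P t x ≤ min 1 ((Real.exp 1 / (Real.exp 1 - 1)) * κ (1 / t) * V x))
    (hP_lower : ∀ t x : ℝ, 0 < t → 0 < x →
      min ((Real.exp 1 - 1) / (8 * Real.exp 1 ^ 2))
        ((z t * t / (2 * Real.exp 1)) * κ (1 / t) * V x) ≤ P t x) :
    (∃ c₄ : ℝ, 0 < c₄ ∧ ∀ t : ℝ, 0 < t → c₄ ≤ z t * t) ∧
    (∃ C : ℝ, 0 < C ∧ ∀ t x : ℝ, 0 < t → 0 < x →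
      C * min 1 (κ (1 / t) * V x) ≤ P t x ∧
      P t x ≤ min 1 (2 * κ (1 / t) * V x)) :=
  global_scaling_supremum_estimate_general κ V P z c ϱ hc hϱ hκ_pos hscal hKfin hV_nonneg hz
    hP_upper hP_lower
end
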